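/- Let n be a positive integer, k ∈ {0,1,…,n}, 0 ≤ ρ < 1, and let g : (0,1) → ℝ satisfy Φ(g(λ)) = λ for all λ ∈ (0,1). Define P_λ[X = k] = ∫_{−∞}^{∞} φ(y) C(n,k) G(λ,ρ,y)^k (1 − G(λ,ρ,y))^{n−k} dy with G(λ,ρ,y) = Φ((g(λ) − √ρ·y)/√(1−ρ)). Then the constrained neutral Bayesian estimator λ₂*(u) = (∫_0^u λ·P_λ[X=k] dλ) / (∫_0^u P_λ[X=k] dλ) is differentiable in u on (0,1) with derivative dλ₂*(u)/du = P_u[X=k] · (∫_0^u (u−λ)·P_λ[X=k] dλ) / (∫_0^u P_λ[X=k] dλ)² > 0; in particular u ↦ λ₂*(u) is strictly increasing on (0,1). -/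

import Mathlib

open MeasureTheory Real

/-- Standard normal density `φ`. -/
noncomputable def stdNormalPDF (s : ℝ) : ℝ := Real.exp (-s ^ 2 / 2) / Real.sqrt (2 * π)

/-- Standard normal cumulative distribution function `Φ`. -/
noncomputable def stdNormalCDF (q : ℝ) : ℝ := ∫ t in Set.Iic q, stdNormalPDF t

/-- Probability `P_λ[X = k]` of exactly `k` defaults among `n` borrowers in the
one-factor Gaussian model with asset correlation `ρ`, where `g = Φ⁻¹`. -/
noncomputable def probDefaults (n k : ℕ) (ρ : ℝ) (g : ℝ → ℝ) (lam : ℝ) : ℝ :=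
  ∫ y : ℝ, stdNormalPDF y * ((n.choose k : ℝ) *
    stdNormalCDF ((g lam - Real.sqrt ρ * y) / Real.sqrt (1 - ρ)) ^ k *
    (1 - stdNormalCDF ((g lam - Real.sqrt ρ * y) / Real.sqrt (1 - ρ))) ^ (n - k))

/-! The estimator is the mean `λ₂*(u) = (∫₀ᵘ λ P) / (∫₀ᵘ P)` of the likelihood `P = P_·[X = k]`.
By the fundamental theorem of calculus and the quotient rule its derivative is
`P(u) (u ∫₀ᵘ P - ∫₀ᵘ λ P) / (∫₀ᵘ P)² = P(u) (∫₀ᵘ (u - λ) P) / (∫₀ᵘ P)²`, which is positive as soon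
as `P > 0`. What is needed of `P` follows from its integrand: `G` takes values in `(0, 1)`, so the
integrand is positive and dominated by `C(n, k) φ`; and `g` is continuous on `(0, 1)` because it
inverts the strictly increasing `Φ` there, so `P` is continuous by dominated convergence. -/

open ProbabilityTheory Filter Topology

theorem StrictMono.continuousAt_of_leftInvOn {α β : Type*} [LinearOrder α] [TopologicalSpace α]
    [OrderTopology α] [LinearOrder β] [TopologicalSpace β] [OrderTopology β]
    {F : α → β} {g : β → α} {s : Set β} {l : β} (hF : StrictMono F) (hs : s ∈ 𝓝 l)
    (hg : Set.LeftInvOn F g s) : ContinuousAt g l := by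
  have hl : F (g l) = l := hg (mem_of_mem_nhds hs)
  refine tendsto_order.2 ⟨fun a ha => ?_, fun b hb => ?_⟩
  · have hFa : F a < l := hl ▸ hF ha
    filter_upwards [hs, Ioi_mem_nhds hFa] with x hxs hx
    exact hF.lt_iff_lt.1 ((hg hxs).symm ▸ hx)
  · have hFb : l < F b := hl ▸ hF hb
    filter_upwards [hs, Iio_mem_nhds hFb] with x hxs hx
    exact hF.lt_iff_lt.1 ((hg hxs).symm ▸ hx)

theorem choose_mul_pow_mul_pow_pos {n k : ℕ} (hk : k ≤ n) {p : ℝ} (hp0 : 0 < p) (hp1 : p < 1) :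
    0 < (n.choose k : ℝ) * p ^ k * (1 - p) ^ (n - k) := by
  have : (0 : ℝ) < n.choose k := Nat.cast_pos.2 (Nat.choose_pos hk)
  have : 0 < 1 - p := sub_pos.2 hp1
  positivity

theorem choose_mul_pow_mul_pow_mem_Icc (n k : ℕ) {p : ℝ} (hp0 : 0 ≤ p) (hp1 : p ≤ 1) :
    (n.choose k : ℝ) * p ^ k * (1 - p) ^ (n - k) ∈ Set.Icc 0 (n.choose k : ℝ) := by
  have hq0 : 0 ≤ 1 - p := sub_nonneg.2 hp1
  refine ⟨by positivity, ?_⟩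
  rw [mul_assoc]
  exact mul_le_of_le_one_right (Nat.cast_nonneg _)
    (mul_le_one₀ (pow_le_one₀ hp0 hp1) (pow_nonneg hq0 _) (pow_le_one₀ hq0 (by linarith)))

/-- Mean of the density proportional to `P` on `(0, u)`; for a likelihood `P` this is the
neutral Bayesian estimator `λ₂*(u)` under the uniform prior on `(0, u)`. -/
noncomputable def constrainedMean (P : ℝ → ℝ) (u : ℝ) : ℝ :=
  (∫ x in (0:ℝ)..u, x * P x) / ∫ x in (0:ℝ)..u, P x

section ConstrainedMean

variable {P : ℝ → ℝ} {b u : ℝ}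

theorem hasDerivAt_constrainedMean {s : Set ℝ} (hs : IsOpen s) (hcont : ContinuousOn P s)
    (hus : u ∈ s) (hint : IntervalIntegrable P volume 0 u) (hD : ∫ x in (0:ℝ)..u, P x ≠ 0) :
    HasDerivAt (constrainedMean P)
      (P u * (∫ x in (0:ℝ)..u, (u - x) * P x) / (∫ x in (0:ℝ)..u, P x) ^ 2) u := by
  have hint_id : IntervalIntegrable (fun x => x * P x) volume 0 u :=
    hint.continuousOn_mul continuousOn_id
  have hcont_id : ContinuousOn (fun x => x * P x) s := continuousOn_id.mul hcont
  have hnum : HasDerivAt (fun v => ∫ x in (0:ℝ)..v, x * P x) (u * P u) u :=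
    intervalIntegral.integral_hasDerivAt_right hint_id
      (hcont_id.stronglyMeasurableAtFilter hs u hus) (hcont_id.continuousAt (hs.mem_nhds hus))
  have hden : HasDerivAt (fun v => ∫ x in (0:ℝ)..v, P x) (P u) u :=
    intervalIntegral.integral_hasDerivAt_right hint (hcont.stronglyMeasurableAtFilter hs u hus)
      (hcont.continuousAt (hs.mem_nhds hus))
  have hsplit : ∫ x in (0:ℝ)..u, (u - x) * P x =
      u * (∫ x in (0:ℝ)..u, P x) - ∫ x in (0:ℝ)..u, x * P x := by
    simp only [sub_mul]
    rw [intervalIntegral.integral_sub (hint.const_mul u) hint_id,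
      intervalIntegral.integral_const_mul]
  rw [hsplit]
  exact (hnum.div hden hD).congr_deriv (by ring)

theorem integral_sub_mul_pos (hu : 0 < u) (hint : IntervalIntegrable P volume 0 u)
    (hpos : ∀ x ∈ Set.Ioo 0 u, 0 < P x) : 0 < ∫ x in (0:ℝ)..u, (u - x) * P x :=
  intervalIntegral.intervalIntegral_pos_of_pos_on
    (hint.continuousOn_mul (continuousOn_const.sub continuousOn_id))
    (fun x hx => mul_pos (sub_pos.2 hx.2) (hpos x hx)) hu

theorem hasDerivAt_constrainedMean_of_pos (hcont : ContinuousOn P (Set.Ioo 0 b))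
    (hint : IntegrableOn P (Set.Ioo 0 b)) (hpos : ∀ x ∈ Set.Ioo 0 b, 0 < P x)
    (hu : u ∈ Set.Ioo 0 b) :
    HasDerivAt (constrainedMean P)
        (P u * (∫ x in (0:ℝ)..u, (u - x) * P x) / (∫ x in (0:ℝ)..u, P x) ^ 2) u ∧
      0 < P u * (∫ x in (0:ℝ)..u, (u - x) * P x) / (∫ x in (0:ℝ)..u, P x) ^ 2 := by
  have hint_u : IntervalIntegrable P volume 0 u := by
    refine IntegrableOn.intervalIntegrable ?_
    rw [Set.uIcc_of_le hu.1.le, integrableOn_Icc_iff_integrableOn_Ioo]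
    exact hint.mono_set (Set.Ioo_subset_Ioo_right hu.2.le)
  have hpos_u : ∀ x ∈ Set.Ioo 0 u, 0 < P x := fun x hx => hpos x ⟨hx.1, hx.2.trans hu.2⟩
  have hD : 0 < ∫ x in (0:ℝ)..u, P x :=
    intervalIntegral.intervalIntegral_pos_of_pos_on hint_u hpos_u hu.1
  refine ⟨hasDerivAt_constrainedMean isOpen_Ioo hcont hu hint_u hD.ne', ?_⟩
  exact div_pos (mul_pos (hpos u hu) (integral_sub_mul_pos hu.1 hint_u hpos_u)) (pow_pos hD 2)

theorem strictMonoOn_constrainedMean (hcont : ContinuousOn P (Set.Ioo 0 b))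
    (hint : IntegrableOn P (Set.Ioo 0 b)) (hpos : ∀ x ∈ Set.Ioo 0 b, 0 < P x) :
    StrictMonoOn (constrainedMean P) (Set.Ioo 0 b) := by
  have hderiv := fun u hu => hasDerivAt_constrainedMean_of_pos hcont hint hpos (u := u) hu
  refine strictMonoOn_of_deriv_pos (convex_Ioo 0 b)
    (fun u hu => (hderiv u hu).1.continuousAt.continuousWithinAt) fun u hu => ?_
  rw [interior_Ioo] at hu
  rw [(hderiv u hu).1.deriv]
  exact (hderiv u hu).2

end ConstrainedMean

theorem stdNormalPDF_eq_gaussianPDFReal : stdNormalPDF = gaussianPDFReal 0 1 := by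
  ext s
  simp [stdNormalPDF, gaussianPDFReal_def, div_eq_inv_mul]

theorem stdNormalPDF_pos (s : ℝ) : 0 < stdNormalPDF s := by
  rw [stdNormalPDF_eq_gaussianPDFReal]
  exact gaussianPDFReal_pos 0 1 s one_ne_zero

theorem integrable_stdNormalPDF : Integrable stdNormalPDF := by
  rw [stdNormalPDF_eq_gaussianPDFReal]
  exact integrable_gaussianPDFReal 0 1

theorem integral_stdNormalPDF : ∫ s, stdNormalPDF s = 1 := by
  rw [stdNormalPDF_eq_gaussianPDFReal]
  exact integral_gaussianPDFReal_eq_one 0 one_ne_zero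

theorem continuous_stdNormalPDF : Continuous stdNormalPDF := by
  unfold stdNormalPDF
  fun_prop

theorem stdNormalCDF_sub_stdNormalCDF (a b : ℝ) :
    stdNormalCDF b - stdNormalCDF a = ∫ s in a..b, stdNormalPDF s :=
  intervalIntegral.integral_Iic_sub_Iic integrable_stdNormalPDF.integrableOn
    integrable_stdNormalPDF.integrableOn

theorem strictMono_stdNormalCDF : StrictMono stdNormalCDF := fun a b hab => by
  have := intervalIntegral.intervalIntegral_pos_of_pos
    integrable_stdNormalPDF.intervalIntegrable stdNormalPDF_pos hab
  linarith [stdNormalCDF_sub_stdNormalCDF a b]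

theorem continuous_stdNormalCDF : Continuous stdNormalCDF := by
  have h : stdNormalCDF = fun q => stdNormalCDF 0 + ∫ s in (0:ℝ)..q, stdNormalPDF s := by
    ext q
    linarith [stdNormalCDF_sub_stdNormalCDF 0 q]
  rw [h]
  exact continuous_const.add
    (intervalIntegral.continuous_primitive (fun _ _ => integrable_stdNormalPDF.intervalIntegrable) 0)

theorem stdNormalCDF_mem_Ioo (q : ℝ) : stdNormalCDF q ∈ Set.Ioo 0 1 := by
  have hnonneg : 0 ≤ stdNormalCDF (q - 1) :=
    setIntegral_nonneg measurableSet_Iic fun s _ => (stdNormalPDF_pos s).le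
  have hle_one : stdNormalCDF (q + 1) ≤ 1 := integral_stdNormalPDF ▸
    setIntegral_le_integral integrable_stdNormalPDF (.of_forall fun s => (stdNormalPDF_pos s).le)
  exact ⟨hnonneg.trans_lt (strictMono_stdNormalCDF (by linarith)),
    (strictMono_stdNormalCDF (by linarith)).trans_le hle_one⟩

/-- `G(λ, ρ, y)`: the default probability of a single borrower given the systematic factor `y`. -/
noncomputable def condDefaultProb (ρ : ℝ) (g : ℝ → ℝ) (lam y : ℝ) : ℝ :=
  stdNormalCDF ((g lam - Real.sqrt ρ * y) / Real.sqrt (1 - ρ))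

noncomputable def probDefaultsIntegrand (n k : ℕ) (ρ : ℝ) (g : ℝ → ℝ) (lam y : ℝ) : ℝ :=
  stdNormalPDF y * ((n.choose k : ℝ) * condDefaultProb ρ g lam y ^ k *
    (1 - condDefaultProb ρ g lam y) ^ (n - k))

section Model

variable {n k : ℕ} {ρ : ℝ} {g : ℝ → ℝ}

theorem probDefaults_eq_integral (lam : ℝ) :
    probDefaults n k ρ g lam = ∫ y, probDefaultsIntegrand n k ρ g lam y := rfl

theorem probDefaultsIntegrand_mem_Icc (lam y : ℝ) :
    probDefaultsIntegrand n k ρ g lam y ∈ Set.Icc 0 (n.choose k * stdNormalPDF y) := by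
  obtain ⟨h0, h1⟩ := choose_mul_pow_mul_pow_mem_Icc n k
    (stdNormalCDF_mem_Ioo _).1.le (stdNormalCDF_mem_Ioo _).2.le
      (p := condDefaultProb ρ g lam y)
  rw [probDefaultsIntegrand, mul_comm (n.choose k : ℝ)]
  exact ⟨mul_nonneg (stdNormalPDF_pos y).le h0,
    mul_le_mul_of_nonneg_left h1 (stdNormalPDF_pos y).le⟩

theorem norm_probDefaultsIntegrand_le (lam y : ℝ) :
    ‖probDefaultsIntegrand n k ρ g lam y‖ ≤ n.choose k * stdNormalPDF y := by
  obtain ⟨h0, h1⟩ := probDefaultsIntegrand_mem_Icc (n := n) (k := k) (ρ := ρ) (g := g) lam y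
  rwa [Real.norm_of_nonneg h0]

theorem probDefaultsIntegrand_pos (hk : k ≤ n) (lam y : ℝ) :
    0 < probDefaultsIntegrand n k ρ g lam y :=
  mul_pos (stdNormalPDF_pos y) (choose_mul_pow_mul_pow_pos hk
    (stdNormalCDF_mem_Ioo _).1 (stdNormalCDF_mem_Ioo _).2)

theorem continuous_probDefaultsIntegrand (lam : ℝ) :
    Continuous (probDefaultsIntegrand n k ρ g lam) := by
  have hG : Continuous (condDefaultProb ρ g lam) :=
    continuous_stdNormalCDF.comp (by fun_prop)
  have := continuous_stdNormalPDF
  unfold probDefaultsIntegrand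
  fun_prop

theorem continuousAt_probDefaultsIntegrand_left {l : ℝ} (hg : ContinuousAt g l) (y : ℝ) :
    ContinuousAt (probDefaultsIntegrand n k ρ g · y) l := by
  have hG : ContinuousAt (condDefaultProb ρ g · y) l :=
    continuous_stdNormalCDF.continuousAt.comp ((hg.sub continuousAt_const).div_const _)
  unfold probDefaultsIntegrand
  fun_prop

theorem integrable_probDefaultsIntegrand (lam : ℝ) :
    Integrable (probDefaultsIntegrand n k ρ g lam) :=
  (integrable_stdNormalPDF.const_mul _).mono'
    (continuous_probDefaultsIntegrand lam).aestronglyMeasurable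
    (.of_forall (norm_probDefaultsIntegrand_le lam))

theorem probDefaults_pos (hk : k ≤ n) (lam : ℝ) : 0 < probDefaults n k ρ g lam := by
  rw [probDefaults_eq_integral, integral_pos_iff_support_of_nonneg
    (fun y => (probDefaultsIntegrand_pos hk lam y).le) (integrable_probDefaultsIntegrand lam),
    Function.support_eq_univ fun y => (probDefaultsIntegrand_pos hk lam y).ne']
  simp

theorem probDefaults_le (lam : ℝ) : probDefaults n k ρ g lam ≤ n.choose k := by
  calc probDefaults n k ρ g lam ≤ ∫ y, (n.choose k : ℝ) * stdNormalPDF y :=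
        integral_mono (integrable_probDefaultsIntegrand lam)
          (integrable_stdNormalPDF.const_mul _) fun y => (probDefaultsIntegrand_mem_Icc lam y).2
    _ = n.choose k := by rw [integral_const_mul, integral_stdNormalPDF, mul_one]

theorem continuousAt_probDefaults {l : ℝ} (hg : ContinuousAt g l) :
    ContinuousAt (probDefaults n k ρ g) l :=
  continuousAt_of_dominated
    (.of_forall fun lam => (continuous_probDefaultsIntegrand lam).aestronglyMeasurable)
    (.of_forall fun lam => .of_forall (norm_probDefaultsIntegrand_le lam))
    (integrable_stdNormalPDF.const_mul _)
    (.of_forall (continuousAt_probDefaultsIntegrand_left hg))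

end Model

theorem constrained_neutral_estimator_deriv_pos_general (n k : ℕ) (hk : k ≤ n)
    (ρ : ℝ) (g : ℝ → ℝ) (hg : ∀ lam ∈ Set.Ioo (0:ℝ) 1, stdNormalCDF (g lam) = lam) :
    (∀ u ∈ Set.Ioo (0:ℝ) 1,
        HasDerivAt
          (fun v => (∫ lam in (0:ℝ)..v, lam * probDefaults n k ρ g lam) /
            (∫ lam in (0:ℝ)..v, probDefaults n k ρ g lam))
          (probDefaults n k ρ g u *
            (∫ lam in (0:ℝ)..u, (u - lam) * probDefaults n k ρ g lam) /
            (∫ lam in (0:ℝ)..u, probDefaults n k ρ g lam) ^ 2) u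
        ∧ 0 < probDefaults n k ρ g u *
            (∫ lam in (0:ℝ)..u, (u - lam) * probDefaults n k ρ g lam) /
            (∫ lam in (0:ℝ)..u, probDefaults n k ρ g lam) ^ 2)
    ∧ StrictMonoOn
        (fun v => (∫ lam in (0:ℝ)..v, lam * probDefaults n k ρ g lam) /
          (∫ lam in (0:ℝ)..v, probDefaults n k ρ g lam))
        (Set.Ioo 0 1) := by
  have hcont : ContinuousOn (probDefaults n k ρ g) (Set.Ioo 0 1) := fun l hl =>
    (continuousAt_probDefaults (strictMono_stdNormalCDF.continuousAt_of_leftInvOn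
      (isOpen_Ioo.mem_nhds hl) hg)).continuousWithinAt
  have hint : IntegrableOn (probDefaults n k ρ g) (Set.Ioo 0 1) :=
    .of_bound measure_Ioo_lt_top (hcont.aestronglyMeasurable measurableSet_Ioo) (n.choose k)
      (.of_forall fun lam => by
        rw [Real.norm_of_nonneg (probDefaults_pos hk lam).le]
        exact probDefaults_le lam)
  have hpos : ∀ lam ∈ Set.Ioo (0:ℝ) 1, 0 < probDefaults n k ρ g lam :=
    fun lam _ => probDefaults_pos hk lam
  exact ⟨fun u hu => hasDerivAt_constrainedMean_of_pos hcont hint hpos hu,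
    strictMonoOn_constrainedMean hcont hint hpos⟩

/-- The constrained neutral Bayesian estimator
`λ₂*(u) = (∫_0^u λ P_λ[X=k] dλ)/(∫_0^u P_λ[X=k] dλ)` in the one-factor Gaussian model is
differentiable on `(0,1)` with the positive derivative
`P_u[X=k] (∫_0^u (u−λ) P_λ[X=k] dλ)/(∫_0^u P_λ[X=k] dλ)²`; in particular it is strictly
increasing on `(0,1)`. -/
theorem constrained_neutral_estimator_deriv_pos (n k : ℕ) (hn : 0 < n) (hk : k ≤ n)
    (ρ : ℝ) (hρ0 : 0 ≤ ρ) (hρ1 : ρ < 1)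
    (g : ℝ → ℝ) (hg : ∀ lam ∈ Set.Ioo (0:ℝ) 1, stdNormalCDF (g lam) = lam) :
    (∀ u ∈ Set.Ioo (0:ℝ) 1,
        HasDerivAt
          (fun v => (∫ lam in (0:ℝ)..v, lam * probDefaults n k ρ g lam) /
            (∫ lam in (0:ℝ)..v, probDefaults n k ρ g lam))
          (probDefaults n k ρ g u *
            (∫ lam in (0:ℝ)..u, (u - lam) * probDefaults n k ρ g lam) /
            (∫ lam in (0:ℝ)..u, probDefaults n k ρ g lam) ^ 2) u
        ∧ 0 < probDefaults n k ρ g u *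
            (∫ lam in (0:ℝ)..u, (u - lam) * probDefaults n k ρ g lam) /
            (∫ lam in (0:ℝ)..u, probDefaults n k ρ g lam) ^ 2)
    ∧ StrictMonoOn
        (fun v => (∫ lam in (0:ℝ)..v, lam * probDefaults n k ρ g lam) /
          (∫ lam in (0:ℝ)..v, probDefaults n k ρ g lam))
        (Set.Ioo 0 1) :=
  constrained_neutral_estimator_deriv_pos_general n k hk ρ g hg
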